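/- Let Γ be a RAACH with defining graph (H,m) and G = Cay(Γ,S). If x, y ∈ Γ are vertices such that e, x, y are pairwise distinct and pairwise adjacent in G (a 3-cycle containing the identity e), then there exists s ∈ S* with ord(s) = 3 such that {x, y} = {s, s²}. -/

import Mathlib

set_option linter.unusedVariables false

attribute [local instance] Classical.propDecidable

/-- The Cayley graph of a group `G` with respect to a connecting set `T`
(assumed closed under inversion, e.g. a symmetrized generating set). -/
def cayley (G : Type*) [Group G] (T : Set G) : SimpleGraph G where
  Adj x y := x ≠ y ∧ (x⁻¹ * y ∈ T ∨ y⁻¹ * x ∈ T)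
  symm := ⟨fun x y h => ⟨h.1.symm, h.2.symm⟩⟩
  loopless := ⟨fun x h => h.1 rfl⟩

open scoped commutatorElement in
/-- The defining relators of a Right Angled Artin-Coxeter Hybrid: `s ^ (m s) = 1` for every
generator `s` with finite order prescription `m s`, and commutators for edges of `H`. -/
def raachRels {S : Type*} (H : SimpleGraph S) (m : S → ℕ∞) : Set (FreeGroup S) :=
  {r | ∃ (s : S) (k : ℕ), m s = (k : ℕ∞) ∧ r = FreeGroup.of s ^ k} ∪
  {r | ∃ s t : S, H.Adj s t ∧ r = ⁅FreeGroup.of s, FreeGroup.of t⁆}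

/-- The Right Angled Artin-Coxeter Hybrid with defining graph `(H, m)`. -/
abbrev RAACH {S : Type*} (H : SimpleGraph S) (m : S → ℕ∞) : Type _ :=
  PresentedGroup (raachRels H m)

/-- The generator of a RAACH corresponding to `s : S`. -/
def raachGen {S : Type*} (H : SimpleGraph S) (m : S → ℕ∞) (s : S) : RAACH H m :=
  PresentedGroup.of s

/-- The symmetrized generating set `S* = {s, s⁻¹ | s ∈ S}` inside the RAACH. -/
def Sstar {S : Type*} (H : SimpleGraph S) (m : S → ℕ∞) : Set (RAACH H m) :=
  {g | ∃ s : S, g = raachGen H m s ∨ g = (raachGen H m s)⁻¹}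

/-- The Cayley graph `Cay(Γ, S)` of the RAACH `Γ` with defining graph `(H, m)`. -/
def cayRAACH {S : Type*} (H : SimpleGraph S) (m : S → ℕ∞) : SimpleGraph (RAACH H m) :=
  cayley (RAACH H m) (Sstar H m)

/-!
Write the triangle as `x = a`, `y = a * b` with `a`, `b`, `a * b` nontrivial elements of `S*`.
The abelianization `Γ → ⨁ₛ ℤ/m(s)` sends `s^{±1}` to `±eₛ`, which is nonzero when `s^{±1} ≠ e`, and
`±eₛ ± eₜ = ±eᵤ` with nonzero terms forces `s = t = u`; so `b, a * b ∈ {a, a⁻¹}`. Now `b = a⁻¹`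
would give `y = e` and `a * a = a` would give `a = e`, hence `b = a` and `a * a = a⁻¹`: `a` has
order 3 and `y = a²`.
-/

open Multiplicative

theorem cayley_adj_iff {G : Type*} [Group G] {T : Set G} (hT : ∀ g ∈ T, g⁻¹ ∈ T) {x y : G} :
    (cayley G T).Adj x y ↔ x ≠ y ∧ x⁻¹ * y ∈ T := by
  refine and_congr_right fun _ => ⟨?_, Or.inl⟩
  rintro (h | h)
  · exact h
  · simpa using hT _ h

theorem eq_of_ne_zero_iff_add {ι : Type*} {M : ι → Type*} [∀ i, AddZeroClass (M i)]
    {f g : ∀ i, M i} {s t u : ι} (hf : ∀ i, f i ≠ 0 ↔ i = s) (hg : ∀ i, g i ≠ 0 ↔ i = t)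
    (hfg : ∀ i, f i + g i ≠ 0 ↔ i = u) : t = s ∧ u = s := by
  have hsum : ∀ i, f i + g i ≠ 0 → i = s ∨ i = t := fun i h => by
    by_contra! hi
    rw [not_ne_iff.mp (mt (hf i).mp hi.1), not_ne_iff.mp (mt (hg i).mp hi.2), add_zero] at h
    exact h rfl
  have hts : t = s := by
    by_contra hts
    have hs : f s + g s ≠ 0 := by
      rw [not_ne_iff.mp (mt (hg s).mp (Ne.symm hts)), add_zero, hf]
    have ht : f t + g t ≠ 0 := by
      rw [not_ne_iff.mp (mt (hf t).mp hts), zero_add, hg]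
    exact hts (((hfg t).mp ht).trans ((hfg s).mp hs).symm)
  exact ⟨hts, by simpa [hts] using hsum u ((hfg u).mpr rfl)⟩

theorem orderOf_eq_three_of_mul_eq_or_eq_inv {G : Type*} [Group G] {a b : G} (ha : a ≠ 1)
    (hab : a * b ≠ 1) (hb : b = a ∨ b = a⁻¹) (hab' : a * b = a ∨ a * b = a⁻¹) :
    b = a ∧ orderOf a = 3 := by
  obtain rfl : b = a := hb.resolve_right fun h => hab (by rw [h, mul_inv_cancel])
  refine ⟨rfl, orderOf_eq_prime ?_ ha⟩
  rcases hab' with h | h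
  · exact absurd (mul_eq_left.mp h) ha
  · rw [pow_succ, sq, h, inv_mul_cancel]

section RAACH

variable {S : Type*} (H : SimpleGraph S) (m : S → ℕ∞)

theorem raachGen_pow_eq_one {s : S} {k : ℕ} (hk : m s = k) : raachGen H m s ^ k = 1 :=
  (map_pow (PresentedGroup.mk _) _ _).symm.trans
    (PresentedGroup.one_of_mem (Or.inl ⟨s, k, hk, rfl⟩))

theorem inv_mem_Sstar : ∀ g ∈ Sstar H m, g⁻¹ ∈ Sstar H m := by
  rintro _ ⟨s, rfl | rfl⟩
  exacts [⟨s, Or.inr rfl⟩, ⟨s, Or.inl (inv_inv _)⟩]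

/-- Since `ZMod (⊤ : ℕ∞).toNat = ZMod 0 = ℤ`, this is the abelianization `Γ → ⨁ₛ ℤ/m(s)`. -/
noncomputable def raachAbel : RAACH H m →* Multiplicative (∀ s, ZMod (m s).toNat) :=
  PresentedGroup.toGroup (f := fun s => ofAdd (Pi.single s 1)) <| by
    rintro r (⟨s, k, hk, rfl⟩ | ⟨s, t, -, rfl⟩)
    · rw [map_pow, FreeGroup.lift_apply_of, ← ofAdd_nsmul, ← Pi.single_smul, nsmul_one,
        (ZMod.natCast_eq_zero_iff k _).mpr (by simp [hk]), Pi.single_zero, ofAdd_zero]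
    · rw [map_commutatorElement, commutatorElement_eq_one_iff_mul_comm, mul_comm]

theorem raachAbel_gen (s : S) : raachAbel H m (raachGen H m s) = ofAdd (Pi.single s 1) :=
  PresentedGroup.toGroup.of _

variable {H m}

theorem raachAbel_ne_zero_iff {s : S} {a : RAACH H m}
    (ha : a = raachGen H m s ∨ a = (raachGen H m s)⁻¹) (ha1 : a ≠ 1) (t : S) :
    toAdd (raachAbel H m a) t ≠ 0 ↔ t = s := by
  have : Nontrivial (ZMod (m s).toNat) := by
    rw [ZMod.nontrivial_iff, Ne, ENat.toNat_eq_iff one_ne_zero]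
    intro hs
    have hs1 : raachGen H m s = 1 := pow_one (raachGen H m s) ▸ raachGen_pow_eq_one H m hs
    rcases ha with rfl | rfl <;> simp [hs1] at ha1
  by_cases hts : t = s
  · subst hts
    rcases ha with rfl | rfl <;> simp [raachAbel_gen]
  · rcases ha with rfl | rfl <;> simp [raachAbel_gen, hts]

theorem eq_or_eq_inv_of_mul_mem_Sstar {a b : RAACH H m} (ha : a ∈ Sstar H m) (hb : b ∈ Sstar H m)
    (hab : a * b ∈ Sstar H m) (ha1 : a ≠ 1) (hb1 : b ≠ 1) (hab1 : a * b ≠ 1) :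
    (b = a ∨ b = a⁻¹) ∧ (a * b = a ∨ a * b = a⁻¹) := by
  obtain ⟨s, hs⟩ := ha
  obtain ⟨t, ht⟩ := hb
  obtain ⟨u, hu⟩ := hab
  obtain ⟨rfl, rfl⟩ := eq_of_ne_zero_iff_add (raachAbel_ne_zero_iff hs ha1)
    (raachAbel_ne_zero_iff ht hb1) (by simpa using raachAbel_ne_zero_iff hu hab1)
  rcases hs with rfl | rfl <;> rcases ht with rfl | rfl <;> simp_all

end RAACH

theorem raach_three_cycles_general {S : Type} (H : SimpleGraph S) (m : S → ℕ∞)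
    (x y : RAACH H m)
    (h1 : (cayRAACH H m).Adj 1 x) (h2 : (cayRAACH H m).Adj x y)
    (h3 : (cayRAACH H m).Adj y 1) :
    ∃ s ∈ Sstar H m, orderOf s = 3 ∧ ({x, y} : Set (RAACH H m)) = {s, s ^ 2} := by
  rw [(cayRAACH H m).adj_comm y] at h3
  simp only [cayRAACH, cayley_adj_iff (inv_mem_Sstar H m), inv_one, one_mul] at h1 h2 h3
  obtain ⟨hx1, hxS⟩ := h1
  obtain ⟨hxy, hbS⟩ := h2
  obtain ⟨hy1, hyS⟩ := h3
  have hxb : x * (x⁻¹ * y) = y := mul_inv_cancel_left x y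
  have hb1 : x⁻¹ * y ≠ 1 := inv_mul_eq_one.not.mpr hxy
  rw [← hxb] at hyS hy1
  obtain ⟨hb', hy'⟩ := eq_or_eq_inv_of_mul_mem_Sstar hxS hbS hyS hx1.symm hb1 (Ne.symm hy1)
  obtain ⟨hb, hord⟩ := orderOf_eq_three_of_mul_eq_or_eq_inv hx1.symm (Ne.symm hy1) hb' hy'
  refine ⟨x, hxS, hord, ?_⟩
  rw [← hxb, hb, sq]

/-- **Triangles in the Cayley graph of a RAACH.** Any 3-cycle through the identity is of the
form `e, s, s²` with `s ∈ S*` of order 3. -/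
theorem raach_three_cycles {S : Type} [Fintype S] (H : SimpleGraph S) (m : S → ℕ∞)
    (hm : ∀ s, m s = 2 ∨ m s = 3 ∨ m s = 4 ∨ m s = (⊤ : ℕ∞))
    (x y : RAACH H m)
    (h1 : (cayRAACH H m).Adj 1 x) (h2 : (cayRAACH H m).Adj x y)
    (h3 : (cayRAACH H m).Adj y 1) :
    ∃ s ∈ Sstar H m, orderOf s = 3 ∧ ({x, y} : Set (RAACH H m)) = {s, s ^ 2} :=
  raach_three_cycles_general H m x y h1 h2 h3
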